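/- Weight function of the orthogonal polynomials of C_3: For all x = (x₁,x₂,x₃) ∈ ℝ³, the product of 4·sin²(π⟨α,x⟩) over the nine positive roots α of C_3 (namely α = e_i − e_j and e_i + e_j for 1 ≤ i < j ≤ 3, and α = 2e_i for i = 1,2,3, with ⟨·,·⟩ the standard inner product) equals the absolute value of (u₃ − 2u₂ + 4u₁ − 8)·(8 + 4u₁ + 2u₂ + u₃)·(u₁²u₂² − 4u₂³ − 4u₁³u₃ + 18u₁u₂u₃ − 27u₃²), where u₁ = 2(cos 2πx₁ + cos 2πx₂ + cos 2πx₃), u₂ = 4(cos 2πx₁ cos 2πx₂ + cos 2πx₁ cos 2πx₃ + cos 2πx₂ cos 2πx₃), and u₃ = 8 cos 2πx₁ cos 2πx₂ cos 2πx₃. -/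
import Mathlib


open Real

/-- Weight function of the orthogonal polynomials of `C₃`: the product of `4 sin²(π⟨α,x⟩)`
over the nine positive roots of `C₃` equals the absolute value of the stated polynomial in
the orbit functions `u₁, u₂, u₃` of the fundamental weights. -/
theorem C3_weight_function (x₁ x₂ x₃ u₁ u₂ u₃ : ℝ)
    (hu₁ : u₁ = 2 * (cos (2 * π * x₁) + cos (2 * π * x₂) + cos (2 * π * x₃)))
    (hu₂ : u₂ = 4 * (cos (2 * π * x₁) * cos (2 * π * x₂) + cos (2 * π * x₁) * cos (2 * π * x₃)
      + cos (2 * π * x₂) * cos (2 * π * x₃)))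
    (hu₃ : u₃ = 8 * cos (2 * π * x₁) * cos (2 * π * x₂) * cos (2 * π * x₃)) :
    (4 * sin (π * (x₁ - x₂)) ^ 2) * (4 * sin (π * (x₁ + x₂)) ^ 2) *
    (4 * sin (π * (x₁ - x₃)) ^ 2) * (4 * sin (π * (x₁ + x₃)) ^ 2) *
    (4 * sin (π * (x₂ - x₃)) ^ 2) * (4 * sin (π * (x₂ + x₃)) ^ 2) *
    (4 * sin (π * (2 * x₁)) ^ 2) * (4 * sin (π * (2 * x₂)) ^ 2) * (4 * sin (π * (2 * x₃)) ^ 2) =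
      |(u₃ - 2 * u₂ + 4 * u₁ - 8) * (8 + 4 * u₁ + 2 * u₂ + u₃) *
        (u₁ ^ 2 * u₂ ^ 2 - 4 * u₂ ^ 3 - 4 * u₁ ^ 3 * u₃ + 18 * u₁ * u₂ * u₃
          - 27 * u₃ ^ 2)| := by
  subst hu₁ hu₂ hu₃
  set c₁ := cos (2 * π * x₁) with hc₁
  set c₂ := cos (2 * π * x₂) with hc₂
  set c₃ := cos (2 * π * x₃) with hc₃
  -- pair identities from cos difference formula
  have pair : ∀ a b : ℝ, cos (2 * π * a) - cos (2 * π * b)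
      = -2 * sin (π * (a + b)) * sin (π * (a - b)) := by
    intro a b
    have h := Real.cos_sub_cos (2 * π * a) (2 * π * b)
    rw [show (2 * π * a + 2 * π * b) / 2 = π * (a + b) by ring,
      show (2 * π * a - 2 * π * b) / 2 = π * (a - b) by ring] at h
    exact h
  have p12 : c₁ - c₂ = -2 * sin (π * (x₁ + x₂)) * sin (π * (x₁ - x₂)) := pair x₁ x₂
  have p13 : c₁ - c₃ = -2 * sin (π * (x₁ + x₃)) * sin (π * (x₁ - x₃)) := pair x₁ x₃
  have p23 : c₂ - c₃ = -2 * sin (π * (x₂ + x₃)) * sin (π * (x₂ - x₃)) := pair x₂ x₃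
  have r12 : sin (π * (x₁ - x₂)) ^ 2 * sin (π * (x₁ + x₂)) ^ 2 = (c₁ - c₂) ^ 2 / 4 := by
    linear_combination (sin (π * (x₁ + x₂)) * sin (π * (x₁ - x₂)) / 2 - (c₁ - c₂) / 4) * p12
  have r13 : sin (π * (x₁ - x₃)) ^ 2 * sin (π * (x₁ + x₃)) ^ 2 = (c₁ - c₃) ^ 2 / 4 := by
    linear_combination (sin (π * (x₁ + x₃)) * sin (π * (x₁ - x₃)) / 2 - (c₁ - c₃) / 4) * p13
  have r23 : sin (π * (x₂ - x₃)) ^ 2 * sin (π * (x₂ + x₃)) ^ 2 = (c₂ - c₃) ^ 2 / 4 := by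
    linear_combination (sin (π * (x₂ + x₃)) * sin (π * (x₂ - x₃)) / 2 - (c₂ - c₃) / 4) * p23
  have qgen : ∀ a : ℝ, sin (π * (2 * a)) ^ 2 = 1 - cos (2 * π * a) ^ 2 := by
    intro a
    rw [show π * (2 * a) = 2 * π * a by ring]
    have := sin_sq_add_cos_sq (2 * π * a)
    linarith
  have q1 : sin (π * (2 * x₁)) ^ 2 = 1 - c₁ ^ 2 := qgen x₁
  have q2 : sin (π * (2 * x₂)) ^ 2 = 1 - c₂ ^ 2 := qgen x₂
  have q3 : sin (π * (2 * x₃)) ^ 2 = 1 - c₃ ^ 2 := qgen x₃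
  have h1 : (0:ℝ) ≤ 1 - c₁ ^ 2 := by
    have := Real.cos_sq_le_one (2 * π * x₁); rw [← hc₁] at this; linarith
  have h2 : (0:ℝ) ≤ 1 - c₂ ^ 2 := by
    have := Real.cos_sq_le_one (2 * π * x₂); rw [← hc₂] at this; linarith
  have h3 : (0:ℝ) ≤ 1 - c₃ ^ 2 := by
    have := Real.cos_sq_le_one (2 * π * x₃); rw [← hc₃] at this; linarith
  set P : ℝ := (c₁ - c₂) ^ 2 * (c₁ - c₃) ^ 2 * (c₂ - c₃) ^ 2 *
      (1 - c₁ ^ 2) * (1 - c₂ ^ 2) * (1 - c₃ ^ 2) with hP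
  have hPnn : 0 ≤ P := by
    apply mul_nonneg (mul_nonneg (mul_nonneg (mul_nonneg (mul_nonneg
      (sq_nonneg _) (sq_nonneg _)) (sq_nonneg _)) h1) h2) h3
  have habs : |(8 * c₁ * c₂ * c₃ - 2 * (4 * (c₁ * c₂ + c₁ * c₃ + c₂ * c₃))
        + 4 * (2 * (c₁ + c₂ + c₃)) - 8) * (8 + 4 * (2 * (c₁ + c₂ + c₃))
        + 2 * (4 * (c₁ * c₂ + c₁ * c₃ + c₂ * c₃)) + 8 * c₁ * c₂ * c₃) *
        ((2 * (c₁ + c₂ + c₃)) ^ 2 * (4 * (c₁ * c₂ + c₁ * c₃ + c₂ * c₃)) ^ 2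
          - 4 * (4 * (c₁ * c₂ + c₁ * c₃ + c₂ * c₃)) ^ 3
          - 4 * (2 * (c₁ + c₂ + c₃)) ^ 3 * (8 * c₁ * c₂ * c₃)
          + 18 * (2 * (c₁ + c₂ + c₃)) * (4 * (c₁ * c₂ + c₁ * c₃ + c₂ * c₃))
            * (8 * c₁ * c₂ * c₃)
          - 27 * (8 * c₁ * c₂ * c₃) ^ 2)| = 4096 * P := by
    rw [show (8 * c₁ * c₂ * c₃ - 2 * (4 * (c₁ * c₂ + c₁ * c₃ + c₂ * c₃))
        + 4 * (2 * (c₁ + c₂ + c₃)) - 8) * (8 + 4 * (2 * (c₁ + c₂ + c₃))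
        + 2 * (4 * (c₁ * c₂ + c₁ * c₃ + c₂ * c₃)) + 8 * c₁ * c₂ * c₃) *
        ((2 * (c₁ + c₂ + c₃)) ^ 2 * (4 * (c₁ * c₂ + c₁ * c₃ + c₂ * c₃)) ^ 2
          - 4 * (4 * (c₁ * c₂ + c₁ * c₃ + c₂ * c₃)) ^ 3
          - 4 * (2 * (c₁ + c₂ + c₃)) ^ 3 * (8 * c₁ * c₂ * c₃)
          + 18 * (2 * (c₁ + c₂ + c₃)) * (4 * (c₁ * c₂ + c₁ * c₃ + c₂ * c₃))
            * (8 * c₁ * c₂ * c₃)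
          - 27 * (8 * c₁ * c₂ * c₃) ^ 2) = -(4096 * P) by rw [hP]; ring]
    rw [abs_neg, abs_of_nonneg (by positivity)]
  calc (4 * sin (π * (x₁ - x₂)) ^ 2) * (4 * sin (π * (x₁ + x₂)) ^ 2) *
      (4 * sin (π * (x₁ - x₃)) ^ 2) * (4 * sin (π * (x₁ + x₃)) ^ 2) *
      (4 * sin (π * (x₂ - x₃)) ^ 2) * (4 * sin (π * (x₂ + x₃)) ^ 2) *
      (4 * sin (π * (2 * x₁)) ^ 2) * (4 * sin (π * (2 * x₂)) ^ 2) * (4 * sin (π * (2 * x₃)) ^ 2)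
      = 262144 * ((sin (π * (x₁ - x₂)) ^ 2 * sin (π * (x₁ + x₂)) ^ 2) *
        ((sin (π * (x₁ - x₃)) ^ 2 * sin (π * (x₁ + x₃)) ^ 2) *
        ((sin (π * (x₂ - x₃)) ^ 2 * sin (π * (x₂ + x₃)) ^ 2) *
        (sin (π * (2 * x₁)) ^ 2 * (sin (π * (2 * x₂)) ^ 2 * sin (π * (2 * x₃)) ^ 2))))) := by
        ring
    _ = 262144 * (((c₁ - c₂) ^ 2 / 4) * (((c₁ - c₃) ^ 2 / 4) * (((c₂ - c₃) ^ 2 / 4) *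
        ((1 - c₁ ^ 2) * ((1 - c₂ ^ 2) * (1 - c₃ ^ 2)))))) := by
        rw [r12, r13, r23, q1, q2, q3]
    _ = 4096 * P := by rw [hP]; ring
    _ = _ := habs.symm
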